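/- Let T be a triangle, f ∈ C²(T), q a convex quadratic function with homogeneous part q̂, and μ > 0 such that d²q ≤ d²f ≤ (1+μ)d²q on T. Then for every edge e of T, the L¹ interpolation-error decrease satisfies (|T|/12)·q̂(e) ≤ D_T(e,f) ≤ (1+μ)·(|T|/12)·q̂(e). Consequently, any edge e maximizing D_T(·,f) satisfies (1+μ)·q̂(e) ≥ max{q̂(a), q̂(b), q̂(c)}, i.e. the selected bisection is a μ-near longest edge bisection in the q-metric. -/

import Mathlib

/-!
For `f` convex on `T` both interpolation errors are integrals of `I f - f`, so `D_T(e, f)` is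
the integral over the two halves of `T` of the difference between the interpolant on `T` and the
interpolant on the half. That difference is affine on each half, vanishes at the vertices other
than the midpoint `m` of `e = [a, b]` and equals `δ = (f a + f b) / 2 - f m` at `m`; since the
integral of an affine function over a triangle is its area times the mean of the vertex values,
`D_T(e, f) = |T| δ / 3`. Along `e` the function `t ↦ f (a + t e)` has second derivative between
`2 q̂(e)` and `(1 + μ) 2 q̂(e)`, so `q̂(e) / 4 ≤ δ ≤ (1 + μ) q̂(e) / 4`. Comparing the resulting
two-sided bounds for the three edges gives the near-longest-edge property.
-/

open MeasureTheory

/-- The 2D cross product / determinant of two vectors of `ℝ × ℝ`. -/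
noncomputable def det2 (u v : ℝ × ℝ) : ℝ := u.1 * v.2 - u.2 * v.1

/-- The area of the triangle with vertices `p0, p1, p2`. -/
noncomputable def triArea (p0 p1 p2 : ℝ × ℝ) : ℝ := |det2 (p1 - p0) (p2 - p0)| / 2

/-- The (closed) triangle with vertices `p0, p1, p2`. -/
def tri (p0 p1 p2 : ℝ × ℝ) : Set (ℝ × ℝ) := convexHull ℝ {p0, p1, p2}

/-- The affine interpolation of `f` at the vertices `p0, p1, p2`, written with
barycentric coordinates; for affinely independent vertices it is the unique
affine function agreeing with `f` at the three vertices. -/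
noncomputable def interp (p0 p1 p2 : ℝ × ℝ) (f : ℝ × ℝ → ℝ) (x : ℝ × ℝ) : ℝ :=
  (det2 (p1 - x) (p2 - x) * f p0 + det2 (p2 - x) (p0 - x) * f p1 +
    det2 (p0 - x) (p1 - x) * f p2) / det2 (p1 - p0) (p2 - p0)

/-- The `L¹` interpolation error `‖f − I_T f‖_{L¹(T)}` on the triangle `T` with
vertices `p0, p1, p2`. -/
noncomputable def interpErr (p0 p1 p2 : ℝ × ℝ) (f : ℝ × ℝ → ℝ) : ℝ :=
  ∫ x in tri p0 p1 p2, |f x - interp p0 p1 p2 f x|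

/-- The decrease `D_T(e,f)` of the `L¹` interpolation error when the triangle
with vertices `z0, z1, z2` is bisected from the midpoint of the edge `e = [z0,z1]`
to the opposite vertex `z2`. -/
noncomputable def Ddec (z0 z1 z2 : ℝ × ℝ) (f : ℝ × ℝ → ℝ) : ℝ :=
  interpErr z0 z1 z2 f - interpErr z0 (midpoint ℝ z0 z1) z2 f -
    interpErr (midpoint ℝ z0 z1) z1 z2 f

open Set

lemma mem_tri_iff {p0 p1 p2 x : ℝ × ℝ} :
    x ∈ tri p0 p1 p2 ↔ ∃ a b c : ℝ, 0 ≤ a ∧ 0 ≤ b ∧ 0 ≤ c ∧ a + b + c = 1 ∧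
      x = a • p0 + b • p1 + c • p2 := by
  constructor
  · rw [tri, convexHull_insert (by simp), convexHull_pair, convexJoin_singleton_left]
    simp only [mem_iUnion, segment, mem_ofPred_eq, exists_prop]
    rintro ⟨y, ⟨b, c, hb, hc, hbc, rfl⟩, a, t, ha, ht, hat, rfl⟩
    exact ⟨a, t * b, t * c, ha, by positivity, by positivity,
      by linear_combination t * hbc + hat, by module⟩
  · rintro ⟨a, b, c, ha, hb, hc, habc, rfl⟩
    have := (convex_convexHull ℝ ({p0, p1, p2} : Set (ℝ × ℝ))).sum_mem (t := Finset.univ)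
      (w := ![a, b, c]) (z := ![p0, p1, p2]) (by intro i _; fin_cases i <;> simpa)
      (by simp [Fin.sum_univ_three, habc])
      (by intro i _; fin_cases i <;> exact subset_convexHull ℝ _ (by simp))
    simpa [tri, Fin.sum_univ_three] using this

theorem LinearIndependent.det2_ne_zero {u v : ℝ × ℝ} (h : LinearIndependent ℝ ![u, v]) :
    det2 u v ≠ 0 := by
  intro hdet
  have hdet' : u.1 * v.2 - u.2 * v.1 = 0 := hdet
  have hpair := LinearIndependent.pair_iff.mp h
  have h2 := hpair v.2 (-u.2) <| Prod.ext
    (by simp only [Prod.fst_add, Prod.smul_fst, smul_eq_mul, Prod.fst_zero]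
        linear_combination hdet')
    (by simp only [Prod.snd_add, Prod.smul_snd, smul_eq_mul, Prod.snd_zero]; ring)
  have h1 := hpair v.1 (-u.1) <| Prod.ext
    (by simp only [Prod.fst_add, Prod.smul_fst, smul_eq_mul, Prod.fst_zero]; ring)
    (by simp only [Prod.snd_add, Prod.smul_snd, smul_eq_mul, Prod.snd_zero]
        linear_combination -hdet')
  exact h.ne_zero 0 (Prod.ext (neg_eq_zero.1 h1.2) (neg_eq_zero.1 h2.2))

theorem AffineIndependent.det2_ne_zero {z0 z1 z2 : ℝ × ℝ}
    (hT : AffineIndependent ℝ ![z0, z1, z2]) : det2 (z1 - z0) (z2 - z0) ≠ 0 := by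
  rw [affineIndependent_iff_linearIndependent_vsub ℝ _ (0 : Fin 3),
    ← linearIndependent_equiv (finSuccAboveEquiv (0 : Fin 3))] at hT
  refine LinearIndependent.det2_ne_zero ?_
  convert! hT
  funext i
  fin_cases i <;> rfl

lemma convex_tri (p0 p1 p2 : ℝ × ℝ) : Convex ℝ (tri p0 p1 p2) := convex_convexHull ℝ _

lemma isCompact_tri (p0 p1 p2 : ℝ × ℝ) : IsCompact (tri p0 p1 p2) :=
  ((finite_singleton p2).insert p1 |>.insert p0).isCompact_convexHull ℝ

lemma measurableSet_tri (p0 p1 p2 : ℝ × ℝ) : MeasurableSet (tri p0 p1 p2) :=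
  (isCompact_tri p0 p1 p2).isClosed.measurableSet

lemma tri_subset {p0 p1 p2 : ℝ × ℝ} {s : Set (ℝ × ℝ)} (hs : Convex ℝ s)
    (h0 : p0 ∈ s) (h1 : p1 ∈ s) (h2 : p2 ∈ s) : tri p0 p1 p2 ⊆ s :=
  convexHull_min (by rintro x (rfl | rfl | rfl) <;> assumption) hs

lemma left_mem_tri (p0 p1 p2 : ℝ × ℝ) : p0 ∈ tri p0 p1 p2 := subset_convexHull ℝ _ (by simp)

lemma middle_mem_tri (p0 p1 p2 : ℝ × ℝ) : p1 ∈ tri p0 p1 p2 := subset_convexHull ℝ _ (by simp)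

lemma right_mem_tri (p0 p1 p2 : ℝ × ℝ) : p2 ∈ tri p0 p1 p2 := subset_convexHull ℝ _ (by simp)

lemma midpoint_mem_tri (p0 p1 p2 : ℝ × ℝ) : midpoint ℝ p0 p1 ∈ tri p0 p1 p2 :=
  convex_tri p0 p1 p2 |>.segment_subset (left_mem_tri p0 p1 p2) (middle_mem_tri p0 p1 p2)
    (midpoint_mem_segment p0 p1)

lemma tri_rotate (p0 p1 p2 : ℝ × ℝ) : tri p1 p2 p0 = tri p0 p1 p2 := by
  rw [tri, tri]
  congr 1
  ext
  simp only [mem_insert_iff, mem_singleton_iff]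
  tauto

lemma det2_rotate (p0 p1 p2 : ℝ × ℝ) :
    det2 (p2 - p1) (p0 - p1) = det2 (p1 - p0) (p2 - p0) := by
  simp only [det2, Prod.fst_sub, Prod.snd_sub]; ring

lemma triArea_rotate (p0 p1 p2 : ℝ × ℝ) : triArea p1 p2 p0 = triArea p0 p1 p2 := by
  rw [triArea, triArea, det2_rotate]

lemma triArea_nonneg (p0 p1 p2 : ℝ × ℝ) : 0 ≤ triArea p0 p1 p2 := by
  unfold triArea; positivity

lemma tri_bisect_left_subset (p0 p1 p2 : ℝ × ℝ) :
    tri p0 (midpoint ℝ p0 p1) p2 ⊆ tri p0 p1 p2 :=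
  tri_subset (convex_tri _ _ _) (left_mem_tri _ _ _) (midpoint_mem_tri _ _ _) (right_mem_tri _ _ _)

lemma tri_bisect_right_subset (p0 p1 p2 : ℝ × ℝ) :
    tri (midpoint ℝ p0 p1) p1 p2 ⊆ tri p0 p1 p2 :=
  tri_subset (convex_tri _ _ _) (midpoint_mem_tri _ _ _) (middle_mem_tri _ _ _)
    (right_mem_tri _ _ _)

lemma tri_eq_union_bisect (p0 p1 p2 : ℝ × ℝ) :
    tri p0 p1 p2 = tri p0 (midpoint ℝ p0 p1) p2 ∪ tri (midpoint ℝ p0 p1) p1 p2 := by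
  refine Subset.antisymm (fun x hx => ?_)
    (union_subset (tri_bisect_left_subset p0 p1 p2) (tri_bisect_right_subset p0 p1 p2))
  obtain ⟨a, b, c, ha, hb, hc, habc, rfl⟩ := mem_tri_iff.1 hx
  rw [midpoint_eq_smul_add, invOf_eq_inv]
  rcases le_total b a with hba | hab
  · exact Or.inl <| mem_tri_iff.2
      ⟨a - b, 2 * b, c, by linarith, by linarith, hc, by linarith, by module⟩
  · exact Or.inr <| mem_tri_iff.2
      ⟨2 * a, b - a, c, by linarith, by linarith, hc, by linarith, by module⟩

lemma det2_bisect_left (p0 p1 p2 : ℝ × ℝ) :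
    det2 (midpoint ℝ p0 p1 - p0) (p2 - p0) = det2 (p1 - p0) (p2 - p0) / 2 := by
  simp only [det2, midpoint_eq_smul_add, invOf_eq_inv, Prod.fst_sub, Prod.snd_sub,
    Prod.smul_fst, Prod.smul_snd, Prod.fst_add, Prod.snd_add, smul_eq_mul]
  ring

lemma det2_bisect_right (p0 p1 p2 : ℝ × ℝ) :
    det2 (p1 - midpoint ℝ p0 p1) (p2 - midpoint ℝ p0 p1) = det2 (p1 - p0) (p2 - p0) / 2 := by
  simp only [det2, midpoint_eq_smul_add, invOf_eq_inv, Prod.fst_sub, Prod.snd_sub,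
    Prod.smul_fst, Prod.smul_snd, Prod.fst_add, Prod.snd_add, smul_eq_mul]
  ring

theorem addHaar_linearMap_preimage_singleton {E : Type*} [NormedAddCommGroup E]
    [NormedSpace ℝ E] [MeasurableSpace E] [BorelSpace E] [FiniteDimensional ℝ E]
    (μ : Measure E) [μ.IsAddHaarMeasure] {l : E →ₗ[ℝ] ℝ} (hl : l ≠ 0) (γ : ℝ) :
    μ (l ⁻¹' {γ}) = 0 := by
  obtain ⟨w, rfl⟩ := LinearMap.surjective_of_ne_zero hl γ
  have : l ⁻¹' {l w} = (· + -w) ⁻¹' (LinearMap.ker l : Set E) := by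
    ext x; simp [← sub_eq_add_neg, sub_eq_zero]
  rw [this, measure_preimage_add_right]
  exact Measure.addHaar_submodule μ _ (by rwa [Ne, LinearMap.ker_eq_top])

lemma volume_tri_inter_tri_bisect {p0 p1 p2 : ℝ × ℝ} (hD : det2 (p1 - p0) (p2 - p0) ≠ 0) :
    volume (tri p0 (midpoint ℝ p0 p1) p2 ∩ tri (midpoint ℝ p0 p1) p1 p2) = 0 := by
  set m := midpoint ℝ p0 p1 with hm
  rw [midpoint_eq_smul_add, invOf_eq_inv] at hm
  set D := det2 (p1 - p0) (p2 - p0)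
  set w := p2 - m
  -- the median `[m, p2]` separates the two halves: `x ↦ det2 (x - m) w` has opposite signs on them
  let l : ℝ × ℝ →ₗ[ℝ] ℝ := w.2 • LinearMap.fst ℝ ℝ ℝ - w.1 • LinearMap.snd ℝ ℝ ℝ
  have hleft {a b c : ℝ} (habc : a + b + c = 1) :
      l (a • p0 + b • m + c • p2) - l m = -(a * D / 2) := by
    rw [show b = 1 - a - c by linarith]
    simp only [l, D, w, hm, det2, LinearMap.sub_apply, LinearMap.smul_apply, LinearMap.fst_apply,
      LinearMap.snd_apply, smul_eq_mul, Prod.fst_sub, Prod.snd_sub, Prod.smul_fst, Prod.smul_snd,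
      Prod.fst_add, Prod.snd_add]
    ring
  have hright {a b c : ℝ} (habc : a + b + c = 1) :
      l (a • m + b • p1 + c • p2) - l m = b * D / 2 := by
    rw [show a = 1 - b - c by linarith]
    simp only [l, D, w, hm, det2, LinearMap.sub_apply, LinearMap.smul_apply, LinearMap.fst_apply,
      LinearMap.snd_apply, smul_eq_mul, Prod.fst_sub, Prod.snd_sub, Prod.smul_fst, Prod.smul_snd,
      Prod.fst_add, Prod.snd_add]
    ring
  have hl0 : l ≠ 0 := fun h => hD <| by
    simpa [h] using hleft (a := 1) (b := 0) (c := 0) (by norm_num)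
  refine measure_mono_null (fun x ⟨hx1, hx2⟩ => ?_)
    (addHaar_linearMap_preimage_singleton volume hl0 (l m))
  obtain ⟨a, b, c, ha, hb, hc, habc, rfl⟩ := mem_tri_iff.1 hx1
  obtain ⟨a', b', c', ha', hb', hc', habc', hx⟩ := mem_tri_iff.1 hx2
  have e1 := hleft habc
  have e2 := hx ▸ hright habc'
  have ha0 : a + b' = 0 := by
    have : (a + b') * D = 0 := by linear_combination 2 * e1 - 2 * e2
    exact (mul_eq_zero.1 this).resolve_right hD
  change l _ = l m
  linear_combination e1 - (D / 2) * (by linarith : a = 0)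

def stdTri : Set (ℝ × ℝ) := {x | 0 ≤ x.1 ∧ 0 ≤ x.2 ∧ x.1 + x.2 ≤ 1}

lemma measurableSet_stdTri : MeasurableSet stdTri :=
  (measurableSet_le measurable_const measurable_fst).inter
    ((measurableSet_le measurable_const measurable_snd).inter
      (measurableSet_le (measurable_fst.add measurable_snd) measurable_const))

lemma setIntegral_stdTri {g : ℝ × ℝ → ℝ} (hg : Continuous g) :
    ∫ x in stdTri, g x = ∫ u in (0 : ℝ)..1, ∫ v in (0 : ℝ)..(1 - u), g (u, v) := by
  have hS := measurableSet_stdTri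
  have hint : IntegrableOn g stdTri :=
    (hg.continuousOn.integrableOn_compact ((isCompact_Icc (a := (0 : ℝ)) (b := 1)).prod
      (isCompact_Icc (a := (0 : ℝ)) (b := 1)))).mono_set
      fun x ⟨h1, h2, h3⟩ => ⟨⟨h1, by linarith⟩, ⟨h2, by linarith⟩⟩
  rw [← integral_indicator hS, Measure.volume_eq_prod,
    integral_prod _ (by rw [← Measure.volume_eq_prod]; exact hint.integrable_indicator hS),
    intervalIntegral.integral_of_le zero_le_one, ← integral_Icc_eq_integral_Ioc,
    ← integral_indicator measurableSet_Icc]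
  congr 1
  ext u
  by_cases hu : u ∈ Icc (0 : ℝ) 1
  · rw [indicator_of_mem hu, intervalIntegral.integral_of_le (by linarith [hu.2]),
      ← integral_Icc_eq_integral_Ioc, ← integral_indicator measurableSet_Icc]
    congr 1
    ext v
    by_cases hv : v ∈ Icc 0 (1 - u)
    · rw [indicator_of_mem hv,
        indicator_of_mem (show (u, v) ∈ stdTri from ⟨hu.1, hv.1, by linarith [hv.2]⟩)]
    · rw [indicator_of_notMem hv,
        indicator_of_notMem (show (u, v) ∉ stdTri from fun ⟨_, h2, h3⟩ => hv ⟨h2, by linarith⟩)]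
  · rw [indicator_of_notMem hu]
    refine integral_eq_zero_of_ae (Filter.Eventually.of_forall fun v => ?_)
    exact indicator_of_notMem (show (u, v) ∉ stdTri from fun ⟨h1, h2, h3⟩ => hu ⟨h1, by linarith⟩) _

lemma integral_quadratic (a b c s t : ℝ) :
    ∫ x in s..t, (a * x ^ 2 + b * x + c) =
      a * (t ^ 3 - s ^ 3) / 3 + b * (t ^ 2 - s ^ 2) / 2 + c * (t - s) := by
  have h2 : IntervalIntegrable (fun x => a * x ^ 2) volume s t :=
    (by fun_prop : Continuous fun x : ℝ => a * x ^ 2).intervalIntegrable s t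
  have h1 : IntervalIntegrable (fun x => b * x) volume s t :=
    (by fun_prop : Continuous fun x : ℝ => b * x).intervalIntegrable s t
  rw [intervalIntegral.integral_add (h2.add h1) intervalIntegrable_const,
    intervalIntegral.integral_add h2 h1, intervalIntegral.integral_const_mul,
    intervalIntegral.integral_const_mul, integral_pow, integral_id,
    intervalIntegral.integral_const, smul_eq_mul]
  ring

lemma setIntegral_stdTri_affine (a b c : ℝ) :
    ∫ x in stdTri, (a * x.1 + b * x.2 + c) = a / 6 + b / 6 + c / 2 := by
  have inner (u : ℝ) : ∫ v in (0 : ℝ)..(1 - u), (a * u + b * v + c) =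
      (b / 2 - a) * u ^ 2 + (a - b - c) * u + (b / 2 + c) := by
    calc ∫ v in (0 : ℝ)..(1 - u), (a * u + b * v + c)
        = ∫ v in (0 : ℝ)..(1 - u), (0 * v ^ 2 + b * v + (a * u + c)) := by
          congr 1; ext v; ring
      _ = _ := by rw [integral_quadratic]; ring
  rw [setIntegral_stdTri (by fun_prop)]
  simp only [inner, integral_quadratic]
  ring

lemma tri_eq_image_stdTri (p0 p1 p2 : ℝ × ℝ) :
    tri p0 p1 p2 = (fun x : ℝ × ℝ => p0 + (x.1 • (p1 - p0) + x.2 • (p2 - p0))) '' stdTri := by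
  ext y
  rw [mem_tri_iff]
  constructor
  · rintro ⟨a, b, c, ha, hb, hc, habc, rfl⟩
    refine ⟨(b, c), ⟨hb, hc, by linarith⟩, ?_⟩
    rw [show a = 1 - b - c by linarith]
    module
  · rintro ⟨x, ⟨h1, h2, h3⟩, rfl⟩
    exact ⟨1 - x.1 - x.2, x.1, x.2, by linarith, h1, h2, by ring, by module⟩

lemma setIntegral_tri_of_affine {p0 p1 p2 : ℝ × ℝ} (hD : det2 (p1 - p0) (p2 - p0) ≠ 0)
    {g : ℝ × ℝ → ℝ} {α β γ : ℝ} (hg : ∀ x, g x = α * x.1 + β * x.2 + γ) :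
    ∫ x in tri p0 p1 p2, g x = triArea p0 p1 p2 * ((g p0 + g p1 + g p2) / 3) := by
  set u := p1 - p0
  set v := p2 - p0
  let M : (ℝ × ℝ) →L[ℝ] ℝ × ℝ :=
    (ContinuousLinearMap.fst ℝ ℝ ℝ).smulRight u + (ContinuousLinearMap.snd ℝ ℝ ℝ).smulRight v
  have hM (x : ℝ × ℝ) : M x = x.1 • u + x.2 • v := rfl
  have hdet : M.det = det2 u v := by
    rw [ContinuousLinearMap.det, ← LinearMap.det_toMatrix (Module.Basis.finTwoProd ℝ),
      Matrix.det_fin_two]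
    simp [LinearMap.toMatrix_apply, M, det2, mul_comm]
  have hinj : Function.Injective M := by
    have hunit : IsUnit (M : (ℝ × ℝ) →ₗ[ℝ] ℝ × ℝ) :=
      (LinearMap.isUnit_iff_isUnit_det _).2 <| isUnit_iff_ne_zero.2 <| by
        change M.det ≠ 0
        rwa [hdet]
    exact ((Module.End.isUnit_iff _).1 hunit).injective
  have hgM (x : ℝ × ℝ) : |M.det| • g (p0 + M x) =
      |det2 u v| * ((g p1 - g p0) * x.1 + (g p2 - g p0) * x.2 + g p0) := by
    simp only [hdet, hM, hg, u, v, smul_eq_mul, Prod.fst_add, Prod.snd_add, Prod.smul_fst,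
      Prod.smul_snd, Prod.fst_sub, Prod.snd_sub]
    ring
  rw [tri_eq_image_stdTri]
  change ∫ x in (fun x => p0 + M x) '' stdTri, g x = _
  rw [integral_image_eq_integral_abs_det_fderiv_smul volume
    measurableSet_stdTri (fun x _ => (M.hasFDerivAt.const_add p0).hasFDerivWithinAt)
    ((add_right_injective p0).comp hinj).injOn]
  simp only [hgM, integral_const_mul, setIntegral_stdTri_affine, triArea]
  ring

lemma interp_barycentric {p0 p1 p2 : ℝ × ℝ} (hD : det2 (p1 - p0) (p2 - p0) ≠ 0)
    (f : ℝ × ℝ → ℝ) {a b c : ℝ} (habc : a + b + c = 1) :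
    interp p0 p1 p2 f (a • p0 + b • p1 + c • p2) = a * f p0 + b * f p1 + c * f p2 := by
  rw [show a = 1 - b - c by linarith]
  simp only [interp, det2, Prod.fst_sub, Prod.snd_sub, Prod.fst_add, Prod.snd_add,
    Prod.smul_fst, Prod.smul_snd, smul_eq_mul] at hD ⊢
  field_simp
  ring

lemma interp_left {p0 p1 p2 : ℝ × ℝ} (hD : det2 (p1 - p0) (p2 - p0) ≠ 0) (f : ℝ × ℝ → ℝ) :
    interp p0 p1 p2 f p0 = f p0 := by
  simpa using interp_barycentric hD f (a := 1) (b := 0) (c := 0) (by norm_num)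

lemma interp_middle {p0 p1 p2 : ℝ × ℝ} (hD : det2 (p1 - p0) (p2 - p0) ≠ 0) (f : ℝ × ℝ → ℝ) :
    interp p0 p1 p2 f p1 = f p1 := by
  simpa using interp_barycentric hD f (a := 0) (b := 1) (c := 0) (by norm_num)

lemma interp_right {p0 p1 p2 : ℝ × ℝ} (hD : det2 (p1 - p0) (p2 - p0) ≠ 0) (f : ℝ × ℝ → ℝ) :
    interp p0 p1 p2 f p2 = f p2 := by
  simpa using interp_barycentric hD f (a := 0) (b := 0) (c := 1) (by norm_num)

lemma interp_midpoint {p0 p1 p2 : ℝ × ℝ} (hD : det2 (p1 - p0) (p2 - p0) ≠ 0)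
    (f : ℝ × ℝ → ℝ) : interp p0 p1 p2 f (midpoint ℝ p0 p1) = (f p0 + f p1) / 2 := by
  rw [show midpoint ℝ p0 p1 = (1 / 2 : ℝ) • p0 + (1 / 2 : ℝ) • p1 + (0 : ℝ) • p2 by
    rw [midpoint_eq_smul_add, invOf_eq_inv]; module, interp_barycentric hD f (by norm_num)]
  ring

lemma exists_interp_eq_affine (p0 p1 p2 : ℝ × ℝ) (f : ℝ × ℝ → ℝ) :
    ∃ α β γ : ℝ, ∀ x, interp p0 p1 p2 f x = α * x.1 + β * x.2 + γ := by
  refine ⟨((p1.2 - p2.2) * f p0 + (p2.2 - p0.2) * f p1 + (p0.2 - p1.2) * f p2) /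
      det2 (p1 - p0) (p2 - p0),
    ((p2.1 - p1.1) * f p0 + (p0.1 - p2.1) * f p1 + (p1.1 - p0.1) * f p2) /
      det2 (p1 - p0) (p2 - p0),
    (det2 p1 p2 * f p0 + det2 p2 p0 * f p1 + det2 p0 p1 * f p2) /
      det2 (p1 - p0) (p2 - p0), fun x => ?_⟩
  simp only [interp, det2, Prod.fst_sub, Prod.snd_sub, div_eq_mul_inv]
  ring

lemma continuous_interp (p0 p1 p2 : ℝ × ℝ) (f : ℝ × ℝ → ℝ) :
    Continuous (interp p0 p1 p2 f) := by
  unfold interp det2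
  fun_prop

lemma le_interp_of_convexOn {p0 p1 p2 : ℝ × ℝ} (hD : det2 (p1 - p0) (p2 - p0) ≠ 0)
    {f : ℝ × ℝ → ℝ} (hf : ConvexOn ℝ (tri p0 p1 p2) f) {x : ℝ × ℝ} (hx : x ∈ tri p0 p1 p2) :
    f x ≤ interp p0 p1 p2 f x := by
  obtain ⟨a, b, c, ha, hb, hc, habc, rfl⟩ := mem_tri_iff.1 hx
  rw [interp_barycentric hD f habc]
  have := hf.map_sum_le (t := Finset.univ) (w := ![a, b, c]) (p := ![p0, p1, p2])
    (by intro i _; fin_cases i <;> simpa) (by simp [Fin.sum_univ_three, habc])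
    (by intro i _; fin_cases i <;> simp [left_mem_tri, middle_mem_tri, right_mem_tri])
  simpa [Fin.sum_univ_three] using this

lemma interpErr_eq_setIntegral_interp_sub {p0 p1 p2 : ℝ × ℝ}
    (hD : det2 (p1 - p0) (p2 - p0) ≠ 0) {f : ℝ × ℝ → ℝ} (hf : ConvexOn ℝ (tri p0 p1 p2) f) :
    interpErr p0 p1 p2 f = ∫ x in tri p0 p1 p2, (interp p0 p1 p2 f x - f x) :=
  setIntegral_congr_fun (measurableSet_tri _ _ _) fun _ hx => by
    rw [abs_sub_comm, abs_of_nonneg (sub_nonneg.2 (le_interp_of_convexOn hD hf hx))]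

lemma sub_midpoint_ge_of_hasDerivAt {g g' g'' : ℝ → ℝ} (hg : ∀ t, HasDerivAt g (g' t) t)
    (hg' : ∀ t, HasDerivAt g' (g'' t) t) {κ : ℝ} (hκ : ∀ t ∈ Icc (0 : ℝ) 1, κ ≤ g'' t) :
    κ / 8 ≤ (g 0 + g 1) / 2 - g (1 / 2) := by
  have hconv : ConvexOn ℝ (Icc 0 1) fun t => g t - κ / 2 * t ^ 2 := by
    refine convexOn_of_hasDerivWithinAt2_nonneg (f' := fun t => g' t - κ * t)
      (f'' := fun t => g'' t - κ) (convex_Icc 0 1)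
      (fun t _ => ((hg t).continuousAt.sub (by fun_prop)).continuousWithinAt)
      (fun t _ => ?_) (fun t _ => ?_) (fun t ht => ?_)
    · exact (((hg t).sub ((hasDerivAt_pow 2 t).const_mul (κ / 2))).congr_deriv
        (by norm_num; ring)).hasDerivWithinAt
    · exact (((hg' t).sub ((hasDerivAt_id t).const_mul κ)).congr_deriv
        (by simp)).hasDerivWithinAt
    · rw [interior_Icc] at ht
      exact sub_nonneg.2 (hκ t (Ioo_subset_Icc_self ht))
  have := hconv.2 (left_mem_Icc.2 zero_le_one) (right_mem_Icc.2 zero_le_one)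
    (by norm_num : (0 : ℝ) ≤ 1 / 2) (by norm_num : (0 : ℝ) ≤ 1 / 2) (by norm_num)
  norm_num at this
  linarith

lemma sub_midpoint_le_of_hasDerivAt {g g' g'' : ℝ → ℝ} (hg : ∀ t, HasDerivAt g (g' t) t)
    (hg' : ∀ t, HasDerivAt g' (g'' t) t) {K : ℝ} (hK : ∀ t ∈ Icc (0 : ℝ) 1, g'' t ≤ K) :
    (g 0 + g 1) / 2 - g (1 / 2) ≤ K / 8 := by
  have := sub_midpoint_ge_of_hasDerivAt (fun t => (hg t).neg) (fun t => (hg' t).neg)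
    (κ := -K) fun t ht => neg_le_neg (hK t ht)
  simp only [Pi.neg_apply] at this
  linarith

section Calculus

variable {E F : Type*} [NormedAddCommGroup E] [NormedSpace ℝ E] [NormedAddCommGroup F]
  [NormedSpace ℝ F]

lemma hasDerivAt_comp_add_smul {f : E → F} {x v : E} {t : ℝ}
    (hf : DifferentiableAt ℝ f (x + t • v)) :
    HasDerivAt (fun s : ℝ => f (x + s • v)) (fderiv ℝ f (x + t • v) v) t :=
  hf.hasFDerivAt.comp_hasDerivAt t (by simpa using ((hasDerivAt_id t).smul_const v).const_add x)

lemma hasDerivAt_fderiv_comp_add_smul {f : E → F} (hf : ContDiff ℝ 2 f) (x v : E) (t : ℝ) :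
    HasDerivAt (fun s : ℝ => fderiv ℝ f (x + s • v) v)
      (fderiv ℝ (fderiv ℝ f) (x + t • v) v v) t :=
  (ContinuousLinearMap.apply ℝ F v).hasFDerivAt.comp_hasDerivAt t <|
    hasDerivAt_comp_add_smul <|
      (hf.fderiv_right (m := 1) (by norm_num)).differentiable (by norm_num) _

lemma add_smul_sub_mem_segment (x y : E) {t : ℝ} (ht : t ∈ Icc (0 : ℝ) 1) :
    x + t • (y - x) ∈ segment ℝ x y :=
  segment_eq_image' ℝ x y ▸ mem_image_of_mem _ ht

lemma convexOn_of_fderiv_fderiv_nonneg {s : Set E} (hs : Convex ℝ s) {f : E → ℝ}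
    (hf : ContDiff ℝ 2 f) (h : ∀ z ∈ s, ∀ v, 0 ≤ fderiv ℝ (fderiv ℝ f) z v v) :
    ConvexOn ℝ s f := by
  refine ⟨hs, fun x hx y hy a b ha hb hab => ?_⟩
  have hg : ConvexOn ℝ (Icc 0 1) fun t : ℝ => f (x + t • (y - x)) :=
    convexOn_of_hasDerivWithinAt2_nonneg (convex_Icc 0 1)
      (hf.continuous.comp (by fun_prop)).continuousOn
      (fun t _ => (hasDerivAt_comp_add_smul (hf.differentiable (by norm_num) _)).hasDerivWithinAt)
      (fun t _ => (hasDerivAt_fderiv_comp_add_smul hf x (y - x) t).hasDerivWithinAt)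
      fun t ht => h _ (hs.segment_subset hx hy
        (add_smul_sub_mem_segment x y (interior_subset ht))) _
  have := hg.2 (left_mem_Icc.2 zero_le_one) (right_mem_Icc.2 zero_le_one) ha hb hab
  simp only [smul_eq_mul, mul_zero, mul_one, zero_add, zero_smul, add_zero, one_smul,
    add_sub_cancel] at this
  rwa [show a • x + b • y = x + b • (y - x) by rw [show a = 1 - b by linarith]; module]

lemma sub_midpoint_bounds_of_fderiv_fderiv {f : E → ℝ} (hf : ContDiff ℝ 2 f) {x y : E}
    {κ K : ℝ} (h : ∀ z ∈ segment ℝ x y, κ ≤ fderiv ℝ (fderiv ℝ f) z (y - x) (y - x) ∧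
      fderiv ℝ (fderiv ℝ f) z (y - x) (y - x) ≤ K) :
    κ / 8 ≤ (f x + f y) / 2 - f (midpoint ℝ x y) ∧
      (f x + f y) / 2 - f (midpoint ℝ x y) ≤ K / 8 := by
  have hg (t : ℝ) := hasDerivAt_comp_add_smul (hf.differentiable (by norm_num) (x + t • (y - x)))
  have hg' := hasDerivAt_fderiv_comp_add_smul hf x (y - x)
  have hdefect : (f (x + (0 : ℝ) • (y - x)) + f (x + (1 : ℝ) • (y - x))) / 2 -
      f (x + (1 / 2 : ℝ) • (y - x)) = (f x + f y) / 2 - f (midpoint ℝ x y) := by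
    have hmid : x + (1 / 2 : ℝ) • (y - x) = midpoint ℝ x y := by
      rw [midpoint_eq_smul_add, invOf_eq_inv]
      module
    rw [hmid, zero_smul, add_zero, one_smul, add_sub_cancel]
  rw [← hdefect]
  exact ⟨sub_midpoint_ge_of_hasDerivAt hg hg' fun t ht => (h _ (add_smul_sub_mem_segment x y ht)).1,
    sub_midpoint_le_of_hasDerivAt hg hg' fun t ht => (h _ (add_smul_sub_mem_segment x y ht)).2⟩

end Calculus

lemma Continuous.integrableOn_tri {g : ℝ × ℝ → ℝ} (hg : Continuous g) (p0 p1 p2 : ℝ × ℝ) :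
    IntegrableOn g (tri p0 p1 p2) :=
  hg.continuousOn.integrableOn_compact (isCompact_tri p0 p1 p2)

lemma setIntegral_tri_eq_add_bisect {p0 p1 p2 : ℝ × ℝ} (hD : det2 (p1 - p0) (p2 - p0) ≠ 0)
    {g : ℝ × ℝ → ℝ} (hg : IntegrableOn g (tri p0 p1 p2)) :
    ∫ x in tri p0 p1 p2, g x =
      (∫ x in tri p0 (midpoint ℝ p0 p1) p2, g x) + ∫ x in tri (midpoint ℝ p0 p1) p1 p2, g x := by
  rw [tri_eq_union_bisect] at hg ⊢
  exact setIntegral_union₀ (volume_tri_inter_tri_bisect hD)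
    (measurableSet_tri _ _ _).nullMeasurableSet (hg.mono_set subset_union_left)
    (hg.mono_set subset_union_right)

lemma setIntegral_tri_interp_sub_interp {q0 q1 q2 : ℝ × ℝ} (hD : det2 (q1 - q0) (q2 - q0) ≠ 0)
    (p0 p1 p2 : ℝ × ℝ) (f : ℝ × ℝ → ℝ) :
    ∫ x in tri q0 q1 q2, (interp p0 p1 p2 f x - interp q0 q1 q2 f x) =
      triArea q0 q1 q2 * ((interp p0 p1 p2 f q0 - f q0) + (interp p0 p1 p2 f q1 - f q1) +
        (interp p0 p1 p2 f q2 - f q2)) / 3 := by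
  obtain ⟨α, β, γ, hp⟩ := exists_interp_eq_affine p0 p1 p2 f
  obtain ⟨α', β', γ', hq⟩ := exists_interp_eq_affine q0 q1 q2 f
  rw [setIntegral_tri_of_affine hD (α := α - α') (β := β - β') (γ := γ - γ')
    (fun x => by rw [hp, hq]; ring), interp_left hD, interp_middle hD, interp_right hD]
  ring

lemma Ddec_eq_of_convexOn {p0 p1 p2 : ℝ × ℝ} (hD : det2 (p1 - p0) (p2 - p0) ≠ 0)
    {f : ℝ × ℝ → ℝ} (hfc : Continuous f) (hf : ConvexOn ℝ (tri p0 p1 p2) f) :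
    Ddec p0 p1 p2 f = triArea p0 p1 p2 / 3 * ((f p0 + f p1) / 2 - f (midpoint ℝ p0 p1)) := by
  set m := midpoint ℝ p0 p1
  have hD1 : det2 (m - p0) (p2 - p0) ≠ 0 := by
    rw [det2_bisect_left]; exact div_ne_zero hD two_ne_zero
  have hD2 : det2 (p1 - m) (p2 - m) ≠ 0 := by
    rw [det2_bisect_right]; exact div_ne_zero hD two_ne_zero
  have hA1 : triArea p0 m p2 = triArea p0 p1 p2 / 2 := by
    rw [triArea, triArea, det2_bisect_left, abs_div, abs_two]
  have hA2 : triArea m p1 p2 = triArea p0 p1 p2 / 2 := by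
    rw [triArea, triArea, det2_bisect_right, abs_div, abs_two]
  set I := interp p0 p1 p2 f
  have hI := continuous_interp p0 p1 p2 f
  have hhalf (q0 q1 q2 : ℝ × ℝ) : (∫ x in tri q0 q1 q2, (I x - f x)) -
      ∫ x in tri q0 q1 q2, (interp q0 q1 q2 f x - f x) =
        ∫ x in tri q0 q1 q2, (I x - interp q0 q1 q2 f x) := by
    have h1 : IntegrableOn (fun x => I x - f x) (tri q0 q1 q2) :=
      (hI.sub hfc).integrableOn_tri _ _ _
    have h2 : IntegrableOn (fun x => interp q0 q1 q2 f x - f x) (tri q0 q1 q2) :=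
      ((continuous_interp _ _ _ f).sub hfc).integrableOn_tri _ _ _
    rw [← integral_sub h1 h2]
    congr 1
    ext x
    ring
  rw [Ddec, interpErr_eq_setIntegral_interp_sub hD hf,
    interpErr_eq_setIntegral_interp_sub hD1 (hf.subset (tri_bisect_left_subset _ _ _)
      (convex_tri _ _ _)),
    interpErr_eq_setIntegral_interp_sub hD2 (hf.subset (tri_bisect_right_subset _ _ _)
      (convex_tri _ _ _)),
    setIntegral_tri_eq_add_bisect hD (g := fun x => I x - f x)
      ((hI.sub hfc).integrableOn_tri _ _ _)]
  rw [add_sub_right_comm, add_sub_assoc, hhalf, hhalf, setIntegral_tri_interp_sub_interp hD1,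
    setIntegral_tri_interp_sub_interp hD2, interp_left hD, interp_middle hD, interp_right hD,
    interp_midpoint hD, hA1, hA2]
  ring

lemma Ddec_bounds {p0 p1 p2 : ℝ × ℝ} (hD : det2 (p1 - p0) (p2 - p0) ≠ 0) {f : ℝ × ℝ → ℝ}
    (hf : ContDiff ℝ 2 f) {qh : ℝ × ℝ → ℝ} (hqh : ∀ v, 0 ≤ qh v) {μ : ℝ}
    (hhess : ∀ x ∈ tri p0 p1 p2, ∀ v : ℝ × ℝ,
      2 * qh v ≤ (fderiv ℝ (fderiv ℝ f) x) v v ∧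
        (fderiv ℝ (fderiv ℝ f) x) v v ≤ (1 + μ) * (2 * qh v)) :
    triArea p0 p1 p2 / 12 * qh (p1 - p0) ≤ Ddec p0 p1 p2 f ∧
      Ddec p0 p1 p2 f ≤ (1 + μ) * (triArea p0 p1 p2 / 12 * qh (p1 - p0)) := by
  have hconv : ConvexOn ℝ (tri p0 p1 p2) f :=
    convexOn_of_fderiv_fderiv_nonneg (convex_tri _ _ _) hf fun z hz v =>
      (mul_nonneg zero_le_two (hqh v)).trans (hhess z hz v).1
  obtain ⟨hlow, hhigh⟩ := sub_midpoint_bounds_of_fderiv_fderiv hf fun z hz =>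
    hhess z ((convex_tri _ _ _).segment_subset (left_mem_tri _ _ _) (middle_mem_tri _ _ _) hz)
      (p1 - p0)
  have hA : 0 ≤ triArea p0 p1 p2 / 3 := by have := triArea_nonneg p0 p1 p2; positivity
  rw [Ddec_eq_of_convexOn hD hf.continuous hconv]
  constructor
  · calc triArea p0 p1 p2 / 12 * qh (p1 - p0)
        = triArea p0 p1 p2 / 3 * (2 * qh (p1 - p0) / 8) := by ring
      _ ≤ _ := mul_le_mul_of_nonneg_left hlow hA
  · calc _ ≤ triArea p0 p1 p2 / 3 * ((1 + μ) * (2 * qh (p1 - p0)) / 8) :=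
          mul_le_mul_of_nonneg_left hhigh hA
      _ = _ := by ring

theorem stmt15_general (z0 z1 z2 : ℝ × ℝ) (hT : AffineIndependent ℝ ![z0, z1, z2])
    (f : ℝ × ℝ → ℝ) (hf : ContDiff ℝ 2 f)
    (qh : ℝ × ℝ → ℝ)
    (hconvq : ∀ v : ℝ × ℝ, 0 ≤ qh v)
    (μ : ℝ) (hμ : 0 < μ)
    (hhess : ∀ x ∈ tri z0 z1 z2, ∀ v : ℝ × ℝ,
      2 * qh v ≤ (fderiv ℝ (fderiv ℝ f) x) v v ∧
        (fderiv ℝ (fderiv ℝ f) x) v v ≤ (1 + μ) * (2 * qh v)) :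
    (triArea z0 z1 z2 / 12 * qh (z1 - z0) ≤ Ddec z0 z1 z2 f ∧
      Ddec z0 z1 z2 f ≤ (1 + μ) * (triArea z0 z1 z2 / 12 * qh (z1 - z0))) ∧
    (triArea z0 z1 z2 / 12 * qh (z2 - z1) ≤ Ddec z1 z2 z0 f ∧
      Ddec z1 z2 z0 f ≤ (1 + μ) * (triArea z0 z1 z2 / 12 * qh (z2 - z1))) ∧
    (triArea z0 z1 z2 / 12 * qh (z0 - z2) ≤ Ddec z2 z0 z1 f ∧
      Ddec z2 z0 z1 f ≤ (1 + μ) * (triArea z0 z1 z2 / 12 * qh (z0 - z2))) ∧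
    ((Ddec z1 z2 z0 f ≤ Ddec z0 z1 z2 f ∧ Ddec z2 z0 z1 f ≤ Ddec z0 z1 z2 f) →
      max (max (qh (z1 - z0)) (qh (z2 - z1))) (qh (z0 - z2)) ≤
        (1 + μ) * qh (z1 - z0)) := by
  have hD := hT.det2_ne_zero
  have hb0 := Ddec_bounds hD hf hconvq hhess
  have hb1 := Ddec_bounds (p0 := z1) (p1 := z2) (p2 := z0) (by rwa [det2_rotate]) hf hconvq
    (tri_rotate z0 z1 z2 ▸ hhess)
  have hb2 := Ddec_bounds (p0 := z2) (p1 := z0) (p2 := z1) (by rwa [det2_rotate, det2_rotate])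
    hf hconvq (tri_rotate z1 z2 z0 ▸ tri_rotate z0 z1 z2 ▸ hhess)
  rw [triArea_rotate] at hb1
  rw [triArea_rotate, triArea_rotate] at hb2
  refine ⟨hb0, hb1, hb2, fun ⟨h10, h20⟩ => ?_⟩
  have hA : 0 < triArea z0 z1 z2 / 12 := by
    have := abs_pos.2 hD
    unfold triArea
    positivity
  refine max_le (max_le (le_mul_of_one_le_left (hconvq _) (by linarith)) ?_) ?_
  · refine le_of_mul_le_mul_left ?_ hA
    linarith [hb1.1, hb0.2]
  · refine le_of_mul_le_mul_left ?_ hA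
    linarith [hb2.1, hb0.2]

/-- if `f ∈ C²` and the convex quadratic `q` (homogeneous part
`qh`) satisfy `d²q ≤ d²f ≤ (1+μ)d²q` on the triangle `T` with vertices
`z0, z1, z2`, then for every edge `e` of `T`,
`(|T|/12)·qh(e) ≤ D_T(e,f) ≤ (1+μ)·(|T|/12)·qh(e)`; consequently any edge
maximizing `D_T(·,f)` (stated for the edge `[z0,z1]`) satisfies
`(1+μ)·qh(e) ≥ max{qh(a), qh(b), qh(c)}`, i.e. the selected bisection is a
`μ`-near longest edge bisection in the `q`-metric. -/
theorem stmt15 (z0 z1 z2 : ℝ × ℝ) (hT : AffineIndependent ℝ ![z0, z1, z2])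
    (f : ℝ × ℝ → ℝ) (hf : ContDiff ℝ 2 f)
    (a20 a11 a02 a10 a01 a00 : ℝ) (q qh : ℝ × ℝ → ℝ)
    (hq : q = fun p => a20 * p.1 ^ 2 + 2 * a11 * p.1 * p.2 + a02 * p.2 ^ 2 +
      a10 * p.1 + a01 * p.2 + a00)
    (hqh : qh = fun p => a20 * p.1 ^ 2 + 2 * a11 * p.1 * p.2 + a02 * p.2 ^ 2)
    (hconvq : ∀ v : ℝ × ℝ, 0 ≤ qh v)
    (μ : ℝ) (hμ : 0 < μ)
    (hhess : ∀ x ∈ tri z0 z1 z2, ∀ v : ℝ × ℝ,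
      2 * qh v ≤ (fderiv ℝ (fderiv ℝ f) x) v v ∧
        (fderiv ℝ (fderiv ℝ f) x) v v ≤ (1 + μ) * (2 * qh v)) :
    (triArea z0 z1 z2 / 12 * qh (z1 - z0) ≤ Ddec z0 z1 z2 f ∧
      Ddec z0 z1 z2 f ≤ (1 + μ) * (triArea z0 z1 z2 / 12 * qh (z1 - z0))) ∧
    (triArea z0 z1 z2 / 12 * qh (z2 - z1) ≤ Ddec z1 z2 z0 f ∧
      Ddec z1 z2 z0 f ≤ (1 + μ) * (triArea z0 z1 z2 / 12 * qh (z2 - z1))) ∧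
    (triArea z0 z1 z2 / 12 * qh (z0 - z2) ≤ Ddec z2 z0 z1 f ∧
      Ddec z2 z0 z1 f ≤ (1 + μ) * (triArea z0 z1 z2 / 12 * qh (z0 - z2))) ∧
    ((Ddec z1 z2 z0 f ≤ Ddec z0 z1 z2 f ∧ Ddec z2 z0 z1 f ≤ Ddec z0 z1 z2 f) →
      max (max (qh (z1 - z0)) (qh (z2 - z1))) (qh (z0 - z2)) ≤
        (1 + μ) * qh (z1 - z0)) :=
  stmt15_general z0 z1 z2 hT f hf qh hconvq μ hμ hhess
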